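/- Define φ : (0,∞)^d → ℝ by φ(t₁,…,t_d) = ∫_{S^{d−1}} f(t₁ω₁,…,t_dω_d) dμ(ω). Then there is a constant C > 0 (depending only on d and l) such that φ(t,…,t) ≤ C · t^{1 − d − l₁/2} for all t ∈ [1,∞). -/

import Mathlib

open MeasureTheory

namespace Stmt8

variable (d : ℕ) (l : Fin d → ℝ)

/-- `f(x) = ∏_{j=1}^d (1+|x_j|)^{−l_j/2}`. -/
noncomputable def f (x : EuclideanSpace ℝ (Fin d)) : ℝ :=
  ∏ j, (1 + |x j|) ^ (-(l j) / 2)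

/-- The Euclidean surface measure `μ` on the unit sphere `S^{d−1} ⊂ ℝ^d`. -/
noncomputable def sphμ : Measure (Metric.sphere (0 : EuclideanSpace ℝ (Fin d)) 1) :=
  (volume : Measure (EuclideanSpace ℝ (Fin d))).toSphere

/-- `φ(t₁,…,t_d) = ∫_{S^{d−1}} f(t₁ω₁,…,t_dω_d) dμ(ω)`. -/
noncomputable def phi (t : Fin d → ℝ) : ℝ :=
  ∫ ω : Metric.sphere (0 : EuclideanSpace ℝ (Fin d)) 1,
    f d l (WithLp.toLp 2 (fun j => t j * (ω : EuclideanSpace ℝ (Fin d)) j)) ∂(sphμ d)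

/-!
Each factor of `f` decreases along rays from the origin, and `f` is dominated by the product `F`
in which every exponent equals `p = l₁/2 > 1`. Averaging over radii `r ∈ (t/2, t)` in polar
coordinates therefore gives `(t/2)^d ∫_{S^{d-1}} F(tω) dμ ≤ ∫_{t/2 < ‖x‖ < t} F`. On that annulus
some coordinate exceeds `t/(2√d)`, and `F` is a product of one-dimensional weights, so the annulus
integral is at most `d · ∫_{|s| > t/(2√d)} (1+|s|)^{-p} ds · (∫ (1+|s|)^{-p} ds)^{d-1}`,
which is `O(t^{1-p})`.
-/

open Set Real Metric
open scoped ENNReal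

section OneDim

variable {p : ℝ}

theorem integral_Ioi_one_add_rpow_neg (hp : 1 < p) {a : ℝ} (ha : 0 ≤ a) :
    ∫ s in Ioi a, (1 + s) ^ (-p) = (1 + a) ^ (1 - p) / (p - 1) := by
  have hderiv : ∀ x ∈ Ici a,
      HasDerivAt (fun s => -(1 + s) ^ (1 - p) / (p - 1)) ((1 + x) ^ (-p)) x := by
    intro x hx
    have hx0 : 0 < 1 + x := by linarith [mem_Ici.mp hx]
    convert! (((hasDerivAt_id x).const_add 1).rpow_const (p := 1 - p)
      (Or.inl hx0.ne')).neg.div_const (p - 1) using 1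
    simp only [id]
    field_simp [show p - 1 ≠ 0 by linarith]
    ring_nf
  have hlim : Filter.Tendsto (fun s => -(1 + s) ^ (1 - p) / (p - 1)) Filter.atTop (nhds 0) := by
    have := ((tendsto_rpow_neg_atTop (by linarith : 0 < p - 1)).comp
      (Filter.tendsto_atTop_add_const_left _ 1 Filter.tendsto_id)).neg.div_const (p - 1)
    simpa using this
  have hint : IntegrableOn (fun s => (1 + s) ^ (-p)) (Ioi a) := by
    simpa [add_comm] using
      integrableOn_add_rpow_Ioi_of_lt (m := 1) (by linarith : -p < -1) (by linarith : -1 < a)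
  rw [integral_Ioi_of_hasDerivAt_of_tendsto' hderiv hint hlim]
  ring

theorem integrable_one_add_abs_rpow_neg (hp : 1 < p) :
    Integrable (fun s : ℝ => (1 + |s|) ^ (-p)) := by
  simpa using integrable_one_add_norm (E := ℝ) (μ := volume) (r := p) (by simpa using hp)

theorem integral_one_add_abs_rpow_neg (hp : 1 < p) :
    ∫ s : ℝ, (1 + |s|) ^ (-p) = 2 / (p - 1) := by
  rw [integral_comp_abs (f := fun s => (1 + s) ^ (-p)), integral_Ioi_one_add_rpow_neg hp le_rfl]
  simp [div_eq_mul_inv]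

theorem setIntegral_lt_abs_one_add_abs_rpow_neg (hp : 1 < p) {a : ℝ} (ha : 0 ≤ a) :
    ∫ s in {s : ℝ | a < |s|}, (1 + |s|) ^ (-p) = 2 * ((1 + a) ^ (1 - p) / (p - 1)) := by
  rw [← integral_indicator (measurableSet_lt measurable_const measurable_abs),
    ← integral_Ioi_one_add_rpow_neg hp ha, ← inter_eq_self_of_subset_right (Ioi_subset_Ioi ha),
    ← setIntegral_indicator measurableSet_Ioi, ← integral_comp_abs]
  congr 1 with s

end OneDim

section Polar

open Module

variable {E : Type*} [NormedAddCommGroup E] [NormedSpace ℝ E] [FiniteDimensional ℝ E]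
  [MeasurableSpace E] [BorelSpace E] [Nontrivial E] (μ : Measure E) [μ.IsAddHaarMeasure]

theorem lintegral_eq_lintegral_toSphere_volumeIoiPow {F : E → ℝ≥0∞} (hF : Measurable F) :
    ∫⁻ x, F x ∂μ =
      ∫⁻ ω, ∫⁻ r, F (r.1 • ω.1) ∂Measure.volumeIoiPow (finrank ℝ E - 1) ∂μ.toSphere := by
  have hmeas : Measurable fun y : sphere (0 : E) 1 × Ioi (0 : ℝ) =>
      F ((homeomorphUnitSphereProd E).symm y).1 :=
    hF.comp (measurable_subtype_coe.comp (Homeomorph.measurable _))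
  calc ∫⁻ x, F x ∂μ = ∫⁻ x : ({0}ᶜ : Set E), F x ∂μ.comap (↑) := by
        rw [lintegral_subtype_comap (measurableSet_singleton 0).compl,
          restrict_compl_singleton]
    _ = ∫⁻ y, F ((homeomorphUnitSphereProd E).symm y).1
          ∂μ.toSphere.prod (Measure.volumeIoiPow (finrank ℝ E - 1)) := by
        rw [← μ.measurePreserving_homeomorphUnitSphereProd.lintegral_comp hmeas]
        simp only [Homeomorph.symm_apply_apply]
    _ = _ := by
        rw [lintegral_prod _ hmeas.aemeasurable]
        simp

theorem ofReal_pow_mul_le_volumeIoiPow_Ioo (n : ℕ) {a b : ℝ} (ha : 0 ≤ a) :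
    ENNReal.ofReal (a ^ n * (b - a)) ≤
      Measure.volumeIoiPow n (Subtype.val ⁻¹' Ioo a b) := by
  have hIoo : MeasurableSet (Subtype.val ⁻¹' Ioo a b : Set (Ioi (0 : ℝ))) :=
    measurable_subtype_coe measurableSet_Ioo
  have hvol : volume.comap Subtype.val (Subtype.val ⁻¹' Ioo a b : Set (Ioi (0 : ℝ))) =
      ENNReal.ofReal (b - a) := by
    rw [comap_subtype_coe_apply measurableSet_Ioi, Subtype.image_preimage_coe,
      inter_eq_self_of_subset_right fun x (hx : x ∈ Ioo a b) => mem_Ioi.2 (ha.trans_lt hx.1),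
      Real.volume_Ioo]
  calc ENNReal.ofReal (a ^ n * (b - a))
      = ∫⁻ _ in Subtype.val ⁻¹' Ioo a b, ENNReal.ofReal (a ^ n) ∂volume.comap Subtype.val := by
        rw [setLIntegral_const, hvol, ENNReal.ofReal_mul (pow_nonneg ha n)]
    _ ≤ ∫⁻ r in Subtype.val ⁻¹' Ioo a b, ENNReal.ofReal ((r : ℝ) ^ n)
          ∂volume.comap Subtype.val :=
        setLIntegral_mono (measurable_subtype_coe.pow_const n).ennreal_ofReal
          fun r hr => ENNReal.ofReal_le_ofReal (pow_le_pow_left₀ ha hr.1.le n)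
    _ = Measure.volumeIoiPow n (Subtype.val ⁻¹' Ioo a b) := by
        rw [Measure.volumeIoiPow, withDensity_apply _ hIoo]

theorem lintegral_toSphere_mul_le_setLIntegral_annulus {F : E → ℝ≥0∞} (hF : Measurable F)
    {a b : ℝ} (ha : 0 ≤ a)
    (hF_ray : ∀ ω : sphere (0 : E) 1, ∀ r ∈ Ioo a b, F (b • (ω : E)) ≤ F (r • (ω : E))) :
    (∫⁻ ω, F (b • (ω : E)) ∂μ.toSphere) * ENNReal.ofReal (a ^ (finrank ℝ E - 1) * (b - a)) ≤
      ∫⁻ x in {x : E | ‖x‖ ∈ Ioo a b}, F x ∂μ := by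
  have hA : MeasurableSet {x : E | ‖x‖ ∈ Ioo a b} := measurableSet_Ioo.preimage measurable_norm
  rw [← lintegral_indicator hA, lintegral_eq_lintegral_toSphere_volumeIoiPow μ (hF.indicator hA),
    ← lintegral_mul_const' _ _ ENNReal.ofReal_ne_top]
  refine lintegral_mono fun ω => ?_
  calc F (b • (ω : E)) * ENNReal.ofReal (a ^ (finrank ℝ E - 1) * (b - a))
      ≤ ∫⁻ _ in Subtype.val ⁻¹' Ioo a b, F (b • (ω : E))
          ∂Measure.volumeIoiPow (finrank ℝ E - 1) := by
        rw [setLIntegral_const]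
        gcongr
        exact ofReal_pow_mul_le_volumeIoiPow_Ioo _ ha
    _ ≤ ∫⁻ r, {x : E | ‖x‖ ∈ Ioo a b}.indicator F (r.1 • (ω : E))
          ∂Measure.volumeIoiPow (finrank ℝ E - 1) := by
        rw [← lintegral_indicator (measurable_subtype_coe measurableSet_Ioo)]
        refine lintegral_mono (indicator_le fun r (hr : r.1 ∈ Ioo a b) => ?_)
        have hmem : ‖r.1 • (ω : E)‖ ∈ Ioo a b := by
          rwa [norm_smul, norm_eq_of_mem_sphere ω, mul_one, Real.norm_of_nonneg r.2.out.le]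
        rw [indicator_of_mem (show r.1 • (ω : E) ∈ {x : E | ‖x‖ ∈ Ioo a b} from hmem)]
        exact hF_ray ω r hr

end Polar

theorem exists_norm_le_sqrt_card_mul_abs_apply {ι : Type*} [Fintype ι] [Nonempty ι]
    (x : EuclideanSpace ℝ ι) : ∃ k, ‖x‖ ≤ √(Fintype.card ι) * |x k| := by
  obtain ⟨k, hk⟩ :=
    exists_eq_ciSup_of_finite (f := fun i => ‖inner ℝ (EuclideanSpace.basisFun ι ℝ i) x‖)
  have hle := (EuclideanSpace.basisFun ι ℝ).norm_le_card_mul_iSup_norm_inner x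
  rw [← hk] at hle
  exact ⟨k, by simpa using hle⟩

theorem f_nonneg (x : EuclideanSpace ℝ (Fin d)) : 0 ≤ f d l x :=
  Finset.prod_nonneg fun _ _ => by positivity

theorem continuous_f : Continuous (f d l) :=
  continuous_finsetProd _ fun _ _ =>
    Continuous.rpow_const (by fun_prop) fun _ => Or.inl (by positivity)

theorem f_le_f_of_le {l' : Fin d → ℝ} (hl : ∀ j, l' j ≤ l j) (x : EuclideanSpace ℝ (Fin d)) :
    f d l x ≤ f d l' x :=
  Finset.prod_le_prod (fun _ _ => by positivity) fun j _ =>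
    rpow_le_rpow_of_exponent_le (le_add_of_nonneg_right (abs_nonneg _)) (by linarith [hl j])

theorem f_smul_le_f_smul (hl : ∀ j, 0 ≤ l j) (x : EuclideanSpace ℝ (Fin d)) {r t : ℝ}
    (hr : 0 ≤ r) (hrt : r ≤ t) : f d l (t • x) ≤ f d l (r • x) :=
  Finset.prod_le_prod (fun _ _ => by positivity) fun j _ => by
    refine rpow_le_rpow_of_nonpos (by positivity) ?_ (by linarith [hl j])
    simp only [PiLp.smul_apply, smul_eq_mul, abs_mul, abs_of_nonneg hr,
      abs_of_nonneg (hr.trans hrt)]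
    gcongr

theorem integrable_f (hl : ∀ j, 2 < l j) : Integrable (f d l) := by
  have hprod : Integrable fun y : Fin d → ℝ => ∏ j, (1 + |y j|) ^ (-(l j) / 2) := by
    simpa only [neg_div, volume_pi] using Integrable.fintype_prod_dep fun j =>
      integrable_one_add_abs_rpow_neg (p := l j / 2) (by linarith [hl j])
  exact (PiLp.volume_preserving_ofLp (Fin d)).integrable_comp_of_integrable hprod

theorem f_const_two_mul (p : ℝ) (x : EuclideanSpace ℝ (Fin d)) :
    f d (fun _ => 2 * p) x = ∏ j, (1 + |x j|) ^ (-p) := by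
  simp only [f, neg_mul_eq_mul_neg, mul_div_cancel_left₀ _ (two_ne_zero' ℝ)]

theorem setIntegral_f_const_lt_abs_apply {p a : ℝ} (hp : 1 < p) (ha : 0 ≤ a) (k : Fin d) :
    ∫ x in {x : EuclideanSpace ℝ (Fin d) | a < |x k|}, f d (fun _ => 2 * p) x =
      2 * ((1 + a) ^ (1 - p) / (p - 1)) * (2 / (p - 1)) ^ (d - 1) := by
  classical
  set w : ℝ → ℝ := fun s => (1 + |s|) ^ (-p)
  have hA : MeasurableSet {s : ℝ | a < |s|} := measurableSet_lt measurable_const measurable_abs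
  have hS : MeasurableSet {x : EuclideanSpace ℝ (Fin d) | a < |x k|} :=
    measurableSet_lt measurable_const (by fun_prop)
  set g : Fin d → ℝ → ℝ := Function.update (fun _ => w) k ({s | a < |s|}.indicator w)
  have hsplit : {x : EuclideanSpace ℝ (Fin d) | a < |x k|}.indicator (f d (fun _ => 2 * p)) =
      fun x => ∏ j, g j (x j) := by
    ext x
    by_cases hx : a < |x k|
    · rw [indicator_of_mem (show x ∈ {x : EuclideanSpace ℝ (Fin d) | a < |x k|} from hx),
        f_const_two_mul]
      refine Finset.prod_congr rfl fun j _ => ?_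
      rcases eq_or_ne j k with rfl | hj
      · simp [g, w, indicator_of_mem (show x j ∈ {s : ℝ | a < |s|} from hx)]
      · simp [g, w, hj]
    · rw [indicator_of_notMem (show x ∉ {x : EuclideanSpace ℝ (Fin d) | a < |x k|} from hx)]
      exact (Finset.prod_eq_zero (Finset.mem_univ k) (by simp [g, hx])).symm
  have hint : ∀ j, ∫ s, g j s = Function.update (fun _ => 2 / (p - 1)) k
      (2 * ((1 + a) ^ (1 - p) / (p - 1))) j := by
    intro j
    rcases eq_or_ne j k with rfl | hj
    · simp only [g, Function.update_self]
      rw [integral_indicator hA, setIntegral_lt_abs_one_add_abs_rpow_neg hp ha]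
    · simp only [g, w, Function.update_of_ne hj, integral_one_add_abs_rpow_neg hp]
  have htransfer : ∫ x : EuclideanSpace ℝ (Fin d), ∏ j, g j (x j) =
      ∫ y : Fin d → ℝ, ∏ j, g j (y j) :=
    (PiLp.volume_preserving_ofLp (Fin d)).integral_comp
      (MeasurableEquiv.toLp 2 (Fin d → ℝ)).symm.measurableEmbedding (fun y => ∏ j, g j (y j))
  rw [← integral_indicator hS, hsplit, htransfer, integral_fintype_prod_volume_eq_prod,
    Finset.prod_congr rfl fun j _ => hint j, Finset.prod_update_of_mem (Finset.mem_univ k),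
    Finset.prod_const, Finset.card_sdiff, Finset.card_univ, Fintype.card_fin]
  simp

theorem setLIntegral_f_const_exists_lt_abs_le {p a : ℝ} (hp : 1 < p) (ha : 0 ≤ a) :
    ∫⁻ x in {x : EuclideanSpace ℝ (Fin d) | ∃ k, a < |x k|},
        ENNReal.ofReal (f d (fun _ => 2 * p) x) ≤
      ENNReal.ofReal (d * (2 * ((1 + a) ^ (1 - p) / (p - 1)) * (2 / (p - 1)) ^ (d - 1))) := by
  have hF : Integrable (f d fun _ => 2 * p) := integrable_f d _ fun _ => by linarith
  have hset : {x : EuclideanSpace ℝ (Fin d) | ∃ k, a < |x k|} = ⋃ k, {x | a < |x k|} := by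
    ext; simp
  calc _ ≤ ∑' k, ∫⁻ x in {x : EuclideanSpace ℝ (Fin d) | a < |x k|},
          ENNReal.ofReal (f d (fun _ => 2 * p) x) := hset ▸ lintegral_iUnion_le _ _
    _ = ∑ _k : Fin d,
          ENNReal.ofReal (2 * ((1 + a) ^ (1 - p) / (p - 1)) * (2 / (p - 1)) ^ (d - 1)) := by
        rw [tsum_fintype]
        refine Finset.sum_congr rfl fun k _ => ?_
        rw [← setIntegral_f_const_lt_abs_apply d hp ha k, ofReal_integral_eq_lintegral_ofReal
          hF.integrableOn (.of_forall fun x => f_nonneg d _ x)]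
    _ = _ := by
        rw [Finset.sum_const, Finset.card_univ, Fintype.card_fin, nsmul_eq_mul,
          ENNReal.ofReal_mul (Nat.cast_nonneg d), ENNReal.ofReal_natCast]

theorem rpow_div_div_pow_eq {n : ℕ} {p t c : ℝ} (ht : 0 < t) (hc : 0 < c) :
    (t / c) ^ (1 - p) / (t / 2) ^ n = (c ^ (p - 1) * 2 ^ n) * t ^ (1 - n - p) := by
  rw [div_rpow ht.le hc.le, div_pow, show (1 : ℝ) - n - p = (1 - p) - n by ring,
    rpow_sub ht (1 - p), rpow_natCast, show 1 - p = -(p - 1) by ring, rpow_neg hc.le]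
  field_simp

theorem lintegral_sphere_f_const_smul_mul_le [NeZero d] {p t : ℝ} (hp : 1 < p) (ht : 0 < t) :
    (∫⁻ ω, ENNReal.ofReal (f d (fun _ => 2 * p) (t • (ω : EuclideanSpace ℝ (Fin d)))) ∂sphμ d) *
        ENNReal.ofReal ((t / 2) ^ d) ≤
      ENNReal.ofReal (d * (2 * ((1 + t / (2 * √d)) ^ (1 - p) / (p - 1)) *
        (2 / (p - 1)) ^ (d - 1))) := by
  have hc : 0 < 2 * √d := by
    have : (0 : ℝ) < d := Nat.cast_pos.2 (Nat.pos_of_ne_zero (NeZero.ne d))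
    positivity
  have hF : Measurable fun x => ENNReal.ofReal (f d (fun _ => 2 * p) x) :=
    (continuous_f d _).measurable.ennreal_ofReal
  have hpolar := lintegral_toSphere_mul_le_setLIntegral_annulus volume hF (half_pos ht).le
    (a := t / 2) (b := t) fun ω r hr => ENNReal.ofReal_le_ofReal <|
      f_smul_le_f_smul d _ (fun _ => by linarith) _ ((half_pos ht).le.trans hr.1.le) hr.2.le
  rw [finrank_euclideanSpace_fin, show t - t / 2 = t / 2 by ring, ← pow_succ,
    Nat.sub_add_cancel (Nat.one_le_iff_ne_zero.2 (NeZero.ne d))] at hpolar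
  have hcover : {x : EuclideanSpace ℝ (Fin d) | ‖x‖ ∈ Ioo (t / 2) t} ⊆
      {x | ∃ k, t / (2 * √d) < |x k|} := by
    intro x hx
    obtain ⟨k, hk⟩ := exists_norm_le_sqrt_card_mul_abs_apply x
    rw [Fintype.card_fin] at hk
    refine ⟨k, ?_⟩
    rw [div_lt_iff₀ hc]
    nlinarith [hx.1]
  exact hpolar.trans <| (lintegral_mono_set hcover).trans <|
    setLIntegral_f_const_exists_lt_abs_le d hp (by positivity)

theorem exists_lintegral_sphere_f_const_smul_le [NeZero d] {p : ℝ} (hp : 1 < p) :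
    ∃ C > 0, ∀ t > 0,
      ∫⁻ ω, ENNReal.ofReal (f d (fun _ => 2 * p) (t • (ω : EuclideanSpace ℝ (Fin d)))) ∂sphμ d ≤
        ENNReal.ofReal (C * t ^ (1 - d - p)) := by
  have hp1 : 0 < p - 1 := by linarith
  have hd : (0 : ℝ) < d := Nat.cast_pos.2 (Nat.pos_of_ne_zero (NeZero.ne d))
  set c : ℝ := 2 * √d
  set K : ℝ := d * (2 / (p - 1)) * (2 / (p - 1)) ^ (d - 1)
  refine ⟨K * (c ^ (p - 1) * 2 ^ d), by positivity, fun t ht => ?_⟩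
  have hconst : d * (2 * ((1 + t / c) ^ (1 - p) / (p - 1)) * (2 / (p - 1)) ^ (d - 1)) ≤
      K * (c ^ (p - 1) * 2 ^ d) * t ^ (1 - d - p) * (t / 2) ^ d := by
    calc _ = K * (1 + t / c) ^ (1 - p) := by ring
      _ ≤ K * (t / c) ^ (1 - p) := by
        gcongr ?_ * ?_
        exact rpow_le_rpow_of_nonpos (by positivity) (by linarith) (by linarith)
      _ = K * ((t / c) ^ (1 - p) / (t / 2) ^ d * (t / 2) ^ d) := by
        rw [div_mul_cancel₀ _ (by positivity)]
      _ = _ := by rw [rpow_div_div_pow_eq ht (by positivity)]; ring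
  have htd : ENNReal.ofReal ((t / 2) ^ d) ≠ 0 := by
    simp only [ne_eq, ENNReal.ofReal_eq_zero, not_le]
    positivity
  refine (ENNReal.mul_le_mul_iff_left htd ENNReal.ofReal_ne_top).1 <|
    (lintegral_sphere_f_const_smul_mul_le d hp ht).trans ?_
  rw [← ENNReal.ofReal_mul (by positivity)]
  exact ENNReal.ofReal_le_ofReal hconst

theorem phi_const (t : ℝ) :
    phi d l (fun _ => t) = ∫ ω, f d l (t • (ω : EuclideanSpace ℝ (Fin d))) ∂sphμ d := rfl

theorem statement8 (hd : 1 ≤ d) (hl4 : ∀ j, 4 ≤ l j) (hmono : Monotone l) :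
    ∃ C > (0 : ℝ), ∀ t : ℝ, 1 ≤ t →
      phi d l (fun _ => t) ≤ C * t ^ (1 - (d : ℝ) - l ⟨0, hd⟩ / 2) := by
  have : NeZero d := ⟨by omega⟩
  obtain ⟨C, hC, hbound⟩ :=
    exists_lintegral_sphere_f_const_smul_le d (p := l ⟨0, hd⟩ / 2) (by linarith [hl4 ⟨0, hd⟩])
  have hf_le : ∀ x, f d l x ≤ f d (fun _ => 2 * (l ⟨0, hd⟩ / 2)) x :=
    f_le_f_of_le d l fun j => by linarith [hmono (show (⟨0, hd⟩ : Fin d) ≤ j from Nat.zero_le _)]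
  refine ⟨C, hC, fun t ht => ?_⟩
  have hcont : Continuous fun ω : sphere (0 : EuclideanSpace ℝ (Fin d)) 1 => f d l (t • ω.1) :=
    (continuous_f d l).comp (continuous_subtype_val.const_smul t)
  rw [phi_const, integral_eq_lintegral_of_nonneg_ae (.of_forall fun _ => f_nonneg d l _)
    hcont.aestronglyMeasurable]
  exact ENNReal.toReal_le_of_le_ofReal (by positivity) <|
    (lintegral_mono fun ω => ENNReal.ofReal_le_ofReal (hf_le _)).trans (hbound t (by linarith))

end Stmt8
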